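/- Let G be a 2-connected bipartite graph with bipartition X ⊔ Y and suppose every edge of G lies in a perfect matching. For any x ∈ X and y ∈ Y (adjacent or not), the induced subgraph G \ {x, y} obtained by deleting x and y has a perfect matching. -/

import Mathlib

attribute [local instance] Classical.propDecidable

/-- `X ⊔ Y` is a bipartition of the graph `G`. -/
def IsBipartition {V : Type*} (G : SimpleGraph V) [Fintype V] (X Y : Finset V) : Prop :=
  Disjoint X Y ∧ X ∪ Y = Finset.univ ∧
    ∀ x y : V, G.Adj x y → (x ∈ X ∧ y ∈ Y) ∨ (x ∈ Y ∧ y ∈ X)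

/-- `G` is connected and every edge of `G` lies in a perfect matching. -/
def MatchingCovered {V : Type*} (G : SimpleGraph V) : Prop :=
  G.Connected ∧ ∀ e ∈ G.edgeSet, ∃ M : G.Subgraph, M.IsPerfectMatching ∧ e ∈ M.edgeSet

/-- `G` is connected and remains connected after deleting any single vertex. -/
def TwoConnected {V : Type*} (G : SimpleGraph V) : Prop :=
  G.Connected ∧ ∀ v : V, (G.induce {u : V | u ≠ v}).Connected

/-- The neighborhood of the vertex set `A` in `G`. -/
noncomputable def nbhd {V : Type*} [Fintype V] (G : SimpleGraph V) (A : Finset V) : Finset V :=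
  Finset.univ.filter (fun y => ∃ x ∈ A, G.Adj x y)

/-- `T` is a tight subset: `|N_G(T)| = |T| + 1`. -/
def Tight {V : Type*} [Fintype V] (G : SimpleGraph V) (T : Finset V) : Prop :=
  (nbhd G T).card = T.card + 1

/-- `T ⊆ X` is an acceptable set of the bipartite graph `G` with bipartition `X ⊔ Y`:
the graph induced by the edges between `T` and `N_G(T)` is connected, and the induced
subgraph on `(X \ T) ⊔ (Y \ N_G(T))` is connected with at least one edge. -/
def Acceptable {V : Type*} [Fintype V] (G : SimpleGraph V) (X Y T : Finset V) : Prop :=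
  T.Nonempty ∧ T ⊆ X ∧
    (G.induce (↑(T ∪ nbhd G T) : Set V)).Connected ∧
    (G.induce (↑((X \ T) ∪ (Y \ nbhd G T)) : Set V)).Connected ∧
    ∃ x ∈ X \ T, ∃ y ∈ Y \ nbhd G T, G.Adj x y

/-! Since `G` is connected and every edge lies in a perfect matching, a set `∅ ≠ A ⊊ X` with
`|N(A)| ≤ |A|` is impossible: a perfect matching through an edge leaving `N(A)` would have to pair
`A` with all of `N(A)`, so `A ∪ N(A)` would be closed under adjacency. Hence `|N(A)| ≥ |A| + 1`,
and deleting `y` costs `A` at most one neighbour, so Hall's condition holds between the equally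
large sets `X \ {x}` and `Y \ {y}`. -/

open Finset SimpleGraph

namespace SimpleGraph.Subgraph

variable {V : Type*} {G : SimpleGraph V} {M : G.Subgraph}

lemma IsPerfectMatching.exists_involutive (hM : M.IsPerfectMatching) :
    ∃ p : V → V, Function.Involutive p ∧ ∀ v w, M.Adj v w ↔ p v = w := by
  choose p hp huniq using fun v => isPerfectMatching_iff.mp hM v
  have hadj : ∀ v w, M.Adj v w ↔ p v = w := fun v w =>
    ⟨fun h => (huniq v w h).symm, fun h => h ▸ hp v⟩
  exact ⟨p, fun v => (hadj _ _).mp (hp v).symm, hadj⟩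

lemma IsMatching.exists_isPerfectMatching_induce (hM : M.IsMatching) {S : Set V}
    (hS : M.verts = S) : ∃ M' : (G.induce S).Subgraph, M'.IsPerfectMatching := by
  subst hS
  refine ⟨M.comap (Embedding.induce M.verts).toHom, isPerfectMatching_iff.mpr fun v => ?_⟩
  obtain ⟨w, hvw, huniq⟩ := hM v.2
  exact ⟨⟨w, M.edge_vert hvw.symm⟩, ⟨M.adj_sub hvw, hvw⟩,
    fun w' hw' => Subtype.ext (huniq _ hw'.2)⟩

end SimpleGraph.Subgraph

section

variable {V : Type*} [Fintype V] {G : SimpleGraph V}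

@[simp]
lemma mem_nbhd {A : Finset V} {v : V} : v ∈ nbhd G A ↔ ∃ a ∈ A, G.Adj a v := by
  simp [nbhd]

lemma SimpleGraph.Subgraph.IsPerfectMatching.card_le_card_nbhd {M : G.Subgraph}
    (hM : M.IsPerfectMatching) (A : Finset V) : #A ≤ #(nbhd G A) := by
  obtain ⟨p, hp, hadj⟩ := hM.exists_involutive
  exact card_le_card_of_injOn p
    (fun a ha => mem_nbhd.mpr ⟨a, ha, M.adj_sub ((hadj a _).mpr rfl)⟩) hp.injective.injOn

/-- A perfect matching through the edge `uw` maps `A` injectively into `N(A)`, hence onto it when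
`|N(A)| ≤ |A|`; so `u ∈ N(A)` is matched into `A`, and its partner is `w`. -/
lemma mem_of_adj_of_card_nbhd_le
    (hpm : ∀ e ∈ G.edgeSet, ∃ M : G.Subgraph, M.IsPerfectMatching ∧ e ∈ M.edgeSet)
    {A : Finset V} (hA : #(nbhd G A) ≤ #A) {u w : V} (hu : u ∈ nbhd G A) (huw : G.Adj u w) :
    w ∈ A := by
  obtain ⟨M, hM, huwM⟩ := hpm s(u, w) huw
  obtain ⟨p, hp, hadj⟩ := hM.exists_involutive
  have himage : A.image p = nbhd G A := by
    refine eq_of_subset_of_card_le (fun v hv => ?_) ?_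
    · obtain ⟨a, ha, rfl⟩ := mem_image.mp hv
      exact mem_nbhd.mpr ⟨a, ha, M.adj_sub ((hadj a _).mpr rfl)⟩
    · rwa [card_image_of_injective A hp.injective]
  obtain ⟨a, ha, rfl⟩ := mem_image.mp (himage ▸ hu)
  rwa [← (hadj _ _).mp (M.mem_edgeSet.mp huwM), hp a]

lemma exists_isMatching_of_card_le_card_nbhd_inter {X Y : Finset V} (hXY : Disjoint X Y)
    (hcard : #X = #Y) (hall : ∀ A ⊆ X, #A ≤ #(nbhd G A ∩ Y)) :
    ∃ M : G.Subgraph, M.verts = ↑X ∪ ↑Y ∧ M.IsMatching := by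
  obtain ⟨f, hf_inj, hf⟩ := (all_card_le_biUnion_card_iff_exists_injective
    fun a : X => nbhd G {a.1} ∩ Y).mp fun s => by
      convert hall (s.map (Function.Embedding.subtype _)) (map_subtype_subset s) using 2
      · exact (card_map _).symm
      · ext v; simp [← and_assoc, exists_and_right]
  let g : ↥(X : Set V) → ↥(Y : Set V) := fun a => ⟨f a, (mem_inter.mp (hf a)).2⟩
  have hg : Function.Bijective g := (Fintype.bijective_iff_injective_and_card g).mpr
    ⟨fun a b hab => hf_inj (congrArg Subtype.val hab), by simp [hcard]⟩
  exact Subgraph.IsMatching.exists_of_disjoint_sets_of_equiv (disjoint_coe.mpr hXY)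
    (Equiv.ofBijective g hg) fun a => by simpa using (mem_inter.mp (hf a)).1

namespace IsBipartition

variable {X Y : Finset V}

lemma symm (h : IsBipartition G X Y) : IsBipartition G Y X :=
  ⟨h.1.symm, union_comm X Y ▸ h.2.1, fun u v huv => (h.2.2 u v huv).symm⟩

lemma mem_or_mem (h : IsBipartition G X Y) (v : V) : v ∈ X ∨ v ∈ Y :=
  mem_union.mp (h.2.1 ▸ mem_univ v)

lemma mem_right_of_adj (h : IsBipartition G X Y) {u v : V} (hu : u ∈ X) (huv : G.Adj u v) :
    v ∈ Y :=
  ((h.2.2 u v huv).resolve_right fun huY => disjoint_left.mp h.1 hu huY.1).2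

lemma nbhd_subset (h : IsBipartition G X Y) {A : Finset V} (hA : A ⊆ X) : nbhd G A ⊆ Y := by
  intro v hv
  obtain ⟨a, ha, hav⟩ := mem_nbhd.mp hv
  exact h.mem_right_of_adj (hA ha) hav

lemma card_eq {M : G.Subgraph} (h : IsBipartition G X Y) (hM : M.IsPerfectMatching) :
    #X = #Y :=
  le_antisymm ((hM.card_le_card_nbhd X).trans (card_le_card (h.nbhd_subset subset_rfl)))
    ((hM.card_le_card_nbhd Y).trans (card_le_card (h.symm.nbhd_subset subset_rfl)))

lemma card_lt_card_nbhd (h : IsBipartition G X Y) (hG : MatchingCovered G)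
    {A : Finset V} (hAX : A ⊆ X) (hA : A.Nonempty) (hA_ne : A ≠ X) : #A < #(nbhd G A) := by
  by_contra! hle
  obtain ⟨a, ha⟩ := hA
  obtain ⟨b, hbX, hbA⟩ := exists_of_ssubset (ssubset_of_subset_of_ne hAX hA_ne)
  have hbN : b ∉ nbhd G A := fun hb => disjoint_left.mp h.1 hbX (h.nbhd_subset hAX hb)
  obtain ⟨d, -, hd_in, hd_out⟩ := (hG.1.preconnected a b).some.exists_boundary_dart
    (↑(A ∪ nbhd G A)) (by simp [ha]) (by simp [hbA, hbN])
  simp only [coe_union, Set.mem_union, mem_coe, not_or] at hd_in hd_out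
  rcases hd_in with hA | hN
  · exact hd_out.2 (mem_nbhd.mpr ⟨_, hA, d.adj⟩)
  · exact hd_out.1 (mem_of_adj_of_card_nbhd_le hG.2 hle hN d.adj)

lemma card_le_card_nbhd_inter_erase (h : IsBipartition G X Y) (hG : MatchingCovered G) {x : V}
    (hx : x ∈ X) (y : V) {A : Finset V} (hA : A ⊆ X.erase x) :
    #A ≤ #(nbhd G A ∩ Y.erase y) := by
  rcases A.eq_empty_or_nonempty with rfl | hA_ne
  · simp
  have hAX : A ⊆ X := hA.trans (erase_subset x X)
  have hlt := h.card_lt_card_nbhd hG hAX hA_ne fun hAX' => notMem_erase x X (hA (hAX' ▸ hx))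
  have herase : nbhd G A ∩ Y.erase y = (nbhd G A).erase y := by
    rw [inter_erase, inter_eq_left.mpr (h.nbhd_subset hAX)]
  rw [herase]
  have := pred_card_le_card_erase (s := nbhd G A) (a := y)
  omega

lemma coe_erase_union_coe_erase (h : IsBipartition G X Y) {x y : V} (hx : x ∈ X) (hy : y ∈ Y) :
    (↑(X.erase x) ∪ ↑(Y.erase y) : Set V) = {v | v ≠ x ∧ v ≠ y} := by
  ext v
  rcases h.mem_or_mem v with hv | hv
  · have hvY : v ∉ Y := disjoint_left.mp h.1 hv
    simp [hv, hvY, (ne_of_mem_of_not_mem hy hvY).symm]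
  · have hvX : v ∉ X := disjoint_right.mp h.1 hv
    simp [hv, hvX, (ne_of_mem_of_not_mem hx hvX).symm]

end IsBipartition

end

theorem stmt19 {V : Type*} [Fintype V] (G : SimpleGraph V) (X Y : Finset V)
    (hbip : IsBipartition G X Y) (h2 : TwoConnected G)
    (hpm : ∀ e ∈ G.edgeSet, ∃ M : G.Subgraph, M.IsPerfectMatching ∧ e ∈ M.edgeSet)
    (x y : V) (hx : x ∈ X) (hy : y ∈ Y) :
    ∃ M : (G.induce {v : V | v ≠ x ∧ v ≠ y}).Subgraph, M.IsPerfectMatching := by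
  have hxy : x ≠ y := fun h => disjoint_left.mp hbip.1 hx (h ▸ hy)
  have : Nontrivial V := ⟨x, y, hxy⟩
  obtain ⟨u, hxu⟩ := h2.1.preconnected.exists_adj_of_nontrivial x
  obtain ⟨M₀, hM₀, -⟩ := hpm s(x, u) hxu
  have hcard : #(X.erase x) = #(Y.erase y) := by
    rw [card_erase_of_mem hx, card_erase_of_mem hy, hbip.card_eq hM₀]
  obtain ⟨M, hM_verts, hM⟩ := exists_isMatching_of_card_le_card_nbhd_inter
    (Disjoint.mono (erase_subset x X) (erase_subset y Y) hbip.1) hcard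
    fun A hA => hbip.card_le_card_nbhd_inter_erase ⟨h2.1, hpm⟩ hx y hA
  exact hM.exists_isPerfectMatching_induce (hM_verts.trans (hbip.coe_erase_union_coe_erase hx hy))
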